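/- arXiv:1409.5003 — 5 statements merged into one kernel-verified Lean document; each statement's English description precedes it below -/
import Mathlib

section
/- Define s = f ∘ t, so that s(k,l) = (k+l−1, n+1−l) for all (k,l) ∈ M_n. Then s^{n+1} = f^{n−1} as order automorphisms of M_n (the combinatorial form of the abstract fractionally Calabi–Yau property: A_n-quivers have Calabi–Yau dimension (n−1)/(n+1)). -/
/-- The mesh poset `M_n`: pairs `(k,l)` of integers with `0 ≤ l ≤ n+1`. -/
def Mesh (n : ℕ) : Type := {p : ℤ × ℤ // 0 ≤ p.2 ∧ p.2 ≤ (n : ℤ) + 1}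

/-- The partial order: `(k,l) ≤ (k',l')` iff `k ≤ k'` and `k + l ≤ k' + l'`. -/
instance (n : ℕ) : PartialOrder (Mesh n) where
  le p q := p.1.1 ≤ q.1.1 ∧ p.1.1 + p.1.2 ≤ q.1.1 + q.1.2
  le_refl p := ⟨le_refl _, le_refl _⟩
  le_trans p q r hpq hqr := ⟨hpq.1.trans hqr.1, hpq.2.trans hqr.2⟩
  le_antisymm := by
    rintro ⟨⟨pk, pl⟩, hp⟩ ⟨⟨qk, ql⟩, hq⟩ ⟨h1, h2⟩ ⟨h3, h4⟩
    dsimp only at h1 h2 h3 h4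
    have hk : pk = qk := le_antisymm h1 h3
    have hl : pl = ql := by omega
    subst hk; subst hl; rfl

/-- The flip symmetry `f(k,l) = (k+l, n+1-l)`. -/
def meshF (n : ℕ) (p : Mesh n) : Mesh n :=
  ⟨(p.1.1 + p.1.2, (n : ℤ) + 1 - p.1.2), by obtain ⟨h1, h2⟩ := p.2; constructor <;> omega⟩

/-- The translation `t(k,l) = (k-1, l)`. -/
def meshT (n : ℕ) (p : Mesh n) : Mesh n := ⟨(p.1.1 - 1, p.1.2), p.2⟩

/-!
Write `s = f ∘ t`. Since `f` and `t` commute, `s^{n+1} = f^{n+1} ∘ t^{n+1} = f^{n-1} ∘ f² ∘ t^{n+1}`,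
and `f²(k,l) = (k+n+1, l)`, i.e. `f² = t^{-(n+1)}`.
-/

theorem Mesh.ext {n : ℕ} {p q : Mesh n} (h : p.1 = q.1) : p = q := Subtype.ext h

theorem meshF_comp_meshT_apply (n : ℕ) (p : Mesh n) :
    ((meshF n ∘ meshT n) p).1 = (p.1.1 + p.1.2 - 1, (n : ℤ) + 1 - p.1.2) :=
  Prod.ext (by simp only [Function.comp, meshF, meshT]; ring) rfl

theorem meshF_commute_meshT (n : ℕ) : Function.Commute (meshF n) (meshT n) := fun p =>
  Mesh.ext (Prod.ext (by simp only [meshF, meshT]; ring) rfl)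

theorem meshT_iterate_apply (n m : ℕ) (p : Mesh n) :
    ((meshT n)^[m] p).1 = (p.1.1 - m, p.1.2) := by
  induction m with
  | zero => simp
  | succ m ih =>
    rw [Function.iterate_succ_apply']
    change ((((meshT n)^[m] p).1.1 - 1, ((meshT n)^[m] p).1.2) : ℤ × ℤ) = _
    rw [ih]
    push_cast
    ring_nf

theorem meshF_meshF_apply (n : ℕ) (p : Mesh n) :
    (meshF n (meshF n p)).1 = (p.1.1 + n + 1, p.1.2) :=
  Prod.ext (by simp only [meshF]; ring) (by simp only [meshF]; ring)

theorem meshF_iterate_two_comp_meshT_iterate (n : ℕ) :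
    (meshF n)^[2] ∘ (meshT n)^[n + 1] = id := by
  funext p
  refine Mesh.ext ?_
  change (meshF n (meshF n ((meshT n)^[n + 1] p))).1 = p.1
  rw [meshF_meshF_apply, meshT_iterate_apply]
  push_cast
  ring_nf

/-- with `s = f ∘ t`, explicitly `s(k,l) = (k+l-1, n+1-l)`, one has
`s^{n+1} = f^{n-1}` (the combinatorial fractionally Calabi–Yau property). -/
theorem mesh_fractionally_calabi_yau (n : ℕ) (hn : 1 ≤ n) :
    (∀ p : Mesh n, (meshF n ∘ meshT n) p =
      ⟨(p.1.1 + p.1.2 - 1, (n : ℤ) + 1 - p.1.2), by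
        obtain ⟨h1, h2⟩ := p.2; constructor <;> omega⟩) ∧
    (meshF n ∘ meshT n)^[n + 1] = (meshF n)^[n - 1] := by
  refine ⟨fun p => Mesh.ext (meshF_comp_meshT_apply n p), ?_⟩
  have hsplit : (meshF n)^[n + 1] = (meshF n)^[n - 1] ∘ (meshF n)^[2] := by
    rw [← Function.iterate_add]
    congr 1
    omega
  calc (meshF n ∘ meshT n)^[n + 1] = (meshF n)^[n + 1] ∘ (meshT n)^[n + 1] :=
        (meshF_commute_meshT n).comp_iterate _
    _ = (meshF n)^[n - 1] ∘ ((meshF n)^[2] ∘ (meshT n)^[n + 1]) := by rw [hsplit]; rfl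
    _ = (meshF n)^[n - 1] := by rw [meshF_iterate_two_comp_meshT_iterate]; rfl
end

section
/- For all integers x and y, the composite f^x ∘ t^y is the identity map of M_n if and only if x is even and 2y = x(n+1). In particular, the only relations among f and t are generated by the commutativity relation ft = tf and the relation f² = t^{−(n+1)}. -/
/-- The flip `f` as a permutation of `M_n`. -/
def meshFEquiv (n : ℕ) : Equiv.Perm (Mesh n) where
  toFun := meshF n
  invFun p := ⟨(p.1.1 + p.1.2 - ((n : ℤ) + 1), (n : ℤ) + 1 - p.1.2), by
    obtain ⟨h1, h2⟩ := p.2; constructor <;> omega⟩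
  left_inv p := by
    obtain ⟨⟨pk, pl⟩, hp⟩ := p
    apply Subtype.ext
    simp only [meshF]
    apply Prod.ext <;> dsimp <;> ring
  right_inv p := by
    obtain ⟨⟨pk, pl⟩, hp⟩ := p
    apply Subtype.ext
    simp only [meshF]
    apply Prod.ext <;> dsimp <;> ring

/-- The translation `t` as a permutation of `M_n`. -/
def meshTEquiv (n : ℕ) : Equiv.Perm (Mesh n) where
  toFun := meshT n
  invFun p := ⟨(p.1.1 + 1, p.1.2), p.2⟩
  left_inv p := by
    apply Subtype.ext
    simp only [meshT]
    apply Prod.ext <;> dsimp <;> ring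
  right_inv p := by
    apply Subtype.ext
    simp only [meshT]
    apply Prod.ext <;> dsimp <;> ring

/-! The translation `t` only moves the first coordinate, and the flip squares to the translation
`t^{-(n+1)}`. Hence an even power of `f` composed with a power of `t` is a power of `t`, which is the
identity exactly when its exponent vanishes, while an odd power of `f` sends the bottom row `l = 0`
to the top row `l = n + 1`, so it is never the identity. -/

section

variable {n : ℕ}

theorem meshFEquiv_apply_val (p : Mesh n) :
    (meshFEquiv n p).1 = (p.1.1 + p.1.2, (n : ℤ) + 1 - p.1.2) :=
  rfl

theorem meshTEquiv_apply_val (p : Mesh n) : (meshTEquiv n p).1 = (p.1.1 - 1, p.1.2) :=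
  rfl

theorem meshTEquiv_inv_apply_val (p : Mesh n) : ((meshTEquiv n)⁻¹ p).1 = (p.1.1 + 1, p.1.2) :=
  rfl

theorem meshTEquiv_zpow_apply_val (y : ℤ) (p : Mesh n) :
    ((meshTEquiv n ^ y) p).1 = (p.1.1 - y, p.1.2) := by
  induction y using Int.induction_on generalizing p with
  | zero => simp
  | succ k ih =>
    rw [zpow_add_one, Equiv.Perm.mul_apply, ih, meshTEquiv_apply_val]
    exact Prod.ext (by ring) rfl
  | pred k ih =>
    rw [zpow_sub_one, Equiv.Perm.mul_apply, ih, meshTEquiv_inv_apply_val]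
    exact Prod.ext (by ring) rfl

theorem meshTEquiv_zpow_eq_one_iff (z : ℤ) : meshTEquiv n ^ z = 1 ↔ z = 0 := by
  refine ⟨fun h => ?_, fun h => h ▸ zpow_zero _⟩
  let origin : Mesh n := ⟨(0, 0), le_rfl, by positivity⟩
  have h0 : ((meshTEquiv n ^ z) origin).1 = origin.1 := congrArg Subtype.val (by rw [h]; rfl)
  rw [meshTEquiv_zpow_apply_val] at h0
  simpa [origin] using congrArg Prod.fst h0

theorem meshFEquiv_sq : meshFEquiv n ^ (2 : ℤ) = meshTEquiv n ^ (-((n : ℤ) + 1)) := by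
  refine Equiv.ext fun p => Subtype.ext ?_
  rw [zpow_two, Equiv.Perm.mul_apply, meshTEquiv_zpow_apply_val, meshFEquiv_apply_val,
    meshFEquiv_apply_val]
  exact Prod.ext (by ring) (by ring)

theorem meshFEquiv_zpow_even (m : ℤ) :
    meshFEquiv n ^ (m + m) = meshTEquiv n ^ (-((n : ℤ) + 1) * m) := by
  rw [← two_mul, zpow_mul, meshFEquiv_sq, zpow_mul]

theorem meshFEquiv_zpow_odd_apply_snd {x : ℤ} (hx : Odd x) (p : Mesh n) :
    ((meshFEquiv n ^ x) p).1.2 = (n : ℤ) + 1 - p.1.2 := by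
  obtain ⟨m, rfl⟩ := hx
  rw [zpow_add_one, Equiv.Perm.mul_apply, two_mul, meshFEquiv_zpow_even,
    meshTEquiv_zpow_apply_val, meshFEquiv_apply_val]

theorem meshFEquiv_zpow_odd_mul_ne_one {x : ℤ} (hx : Odd x) (y : ℤ) :
    meshFEquiv n ^ x * meshTEquiv n ^ y ≠ 1 := by
  intro h
  let origin : Mesh n := ⟨(0, 0), le_rfl, by positivity⟩
  have h0 : ((meshFEquiv n ^ x * meshTEquiv n ^ y) origin).1.2 = origin.1.2 := by rw [h]; rfl
  rw [Equiv.Perm.mul_apply, meshFEquiv_zpow_odd_apply_snd hx, meshTEquiv_zpow_apply_val] at h0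
  simp only [origin] at h0
  omega

end

theorem mesh_f_t_relations_general (n : ℕ) (x y : ℤ) :
    meshFEquiv n ^ x * meshTEquiv n ^ y = 1 ↔ Even x ∧ 2 * y = x * ((n : ℤ) + 1) := by
  rcases Int.even_or_odd x with ⟨m, rfl⟩ | hx
  · rw [meshFEquiv_zpow_even, ← zpow_add, meshTEquiv_zpow_eq_one_iff]
    exact ⟨fun h => ⟨⟨m, rfl⟩, by linarith⟩, fun ⟨_, h⟩ => by linarith⟩
  · exact iff_of_false (meshFEquiv_zpow_odd_mul_ne_one hx y)
      fun ⟨hev, _⟩ => Int.not_even_iff_odd.mpr hx hev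

/-- `f^x ∘ t^y = id` if and only if `x` is even and `2y = x(n+1)`. -/
theorem mesh_f_t_relations (n : ℕ) (hn : 1 ≤ n) (x y : ℤ) :
    meshFEquiv n ^ x * meshTEquiv n ^ y = 1 ↔ Even x ∧ 2 * y = x * ((n : ℤ) + 1) :=
  mesh_f_t_relations_general n x y
end

section
/- Let I_n = {(k,l) ∈ M_n : 1 ≤ l ≤ n} be the interior of the mesh poset and T_n = {(k,l) ∈ ℤ × ℤ : 1 ≤ l ≤ n and 0 ≤ k ≤ n−l}. Then every orbit of the action of the cyclic group generated by f on I_n contains exactly one element of T_n; consequently, f has exactly n(n+1)/2 orbits on I_n (matching the number of suspension orbits in the Auslander–Reiten quiver of an A_n-quiver). -/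
/-- The orbit equivalence relation of the cyclic group generated by `f` on the
interior `I_n = {(k,l) ∈ M_n : 1 ≤ l ≤ n}` of the mesh poset. -/
def meshOrbitSetoid (n : ℕ) : Setoid {p : Mesh n // 1 ≤ p.1.2 ∧ p.1.2 ≤ (n : ℤ)} where
  r p q := ∃ m : ℤ, (meshFEquiv n ^ m) p.1 = q.1
  iseqv := by
    refine ⟨fun p => ⟨0, by simp⟩, ?_, ?_⟩
    · rintro p q ⟨m, hm⟩
      refine ⟨-m, ?_⟩
      rw [← hm, ← Equiv.Perm.mul_apply, ← zpow_add]
      simp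
    · rintro p q r ⟨m, hm⟩ ⟨m', hm'⟩
      refine ⟨m' + m, ?_⟩
      rw [← hm', ← hm, ← Equiv.Perm.mul_apply, ← zpow_add]

/-! The square of `f` is the translation `(k, l) ↦ (k + n + 1, l)`, so every orbit of `⟨f⟩` is
`{(k + a(n+1), l)} ∪ {(k + l + a(n+1), n + 1 - l)}` for `a ∈ ℤ`. Reducing `k` modulo `n + 1`
gives a point of `T_n`, either directly or after one more application of `f`. Two points of
`T_n` in one orbit coincide: the multiple `a(n+1)` relating them lies in `[-n, n]`, hence
vanishes, and that rules out the second form. Finally `(k, l) ↦ (k, n - l)` identifies `T_n`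
with the pairs `i ≤ j` in `Fin n`, of which there are `n(n+1)/2`. -/

theorem Equiv.Perm.zpow_apply_eq_add_zsmul {α G : Type*} [AddCommGroup G] (σ : Equiv.Perm α)
    (c : α → G) (v : G) (h : ∀ x, c (σ x) = c x + v) (a : ℤ) (x : α) :
    c ((σ ^ a) x) = c x + a • v := by
  induction a using Int.induction_on generalizing x with
  | zero => simp
  | succ a ih =>
    rw [zpow_add_one, Equiv.Perm.mul_apply, ih, h, add_one_zsmul]
    abel
  | pred a ih =>
    have h' : c (σ⁻¹ x) = c x - v := eq_sub_of_add_eq (by simp [← h])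
    rw [zpow_sub_one, Equiv.Perm.mul_apply, ih, h', sub_one_zsmul]
    abel

section MeshOrbits

variable {n : ℕ}

theorem meshFEquiv_sq_apply_val (p : Mesh n) :
    ((meshFEquiv n ^ 2) p).1 = p.1 + ((n : ℤ) + 1, 0) := by
  rw [sq, Equiv.Perm.mul_apply, meshFEquiv_apply_val, meshFEquiv_apply_val]
  ext <;> dsimp <;> ring

theorem meshFEquiv_zpow_two_mul_apply_val (a : ℤ) (p : Mesh n) :
    ((meshFEquiv n ^ (2 * a)) p).1 = (p.1.1 + a * ((n : ℤ) + 1), p.1.2) := by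
  rw [zpow_mul, zpow_two, ← sq,
    (meshFEquiv n ^ 2).zpow_apply_eq_add_zsmul Subtype.val _ meshFEquiv_sq_apply_val]
  ext <;> simp

theorem meshFEquiv_zpow_two_mul_add_one_apply_val (a : ℤ) (p : Mesh n) :
    ((meshFEquiv n ^ (2 * a + 1)) p).1 =
      (p.1.1 + p.1.2 + a * ((n : ℤ) + 1), (n : ℤ) + 1 - p.1.2) := by
  rw [zpow_add_one, Equiv.Perm.mul_apply, meshFEquiv_zpow_two_mul_apply_val]
  rfl

def meshFundDomain (n : ℕ) : Set (Mesh n) :=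
  {q | 1 ≤ q.1.2 ∧ q.1.2 ≤ (n : ℤ) ∧ 0 ≤ q.1.1 ∧ q.1.1 ≤ (n : ℤ) - q.1.2}

theorem eq_of_mem_meshFundDomain_of_zpow_apply_eq {q q' : Mesh n} (hq : q ∈ meshFundDomain n)
    (hq' : q' ∈ meshFundDomain n) {m : ℤ} (h : (meshFEquiv n ^ m) q = q') : q = q' := by
  obtain ⟨hl1, hl2, hk1, hk2⟩ := hq
  obtain ⟨hl1', hl2', hk1', hk2'⟩ := hq'
  obtain ⟨a, rfl | rfl⟩ := Int.even_or_odd' m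
  · have hval := congrArg Subtype.val h
    rw [meshFEquiv_zpow_two_mul_apply_val] at hval
    obtain ⟨hk, hl⟩ := Prod.ext_iff.mp hval
    have hx : a * ((n : ℤ) + 1) = 0 :=
      Int.eq_zero_of_abs_lt_dvd (dvd_mul_left _ _) (abs_lt.mpr ⟨by omega, by omega⟩)
    exact Subtype.ext (Prod.ext (by omega) (by omega))
  · have hval := congrArg Subtype.val h
    rw [meshFEquiv_zpow_two_mul_add_one_apply_val] at hval
    obtain ⟨hk, hl⟩ := Prod.ext_iff.mp hval
    have hx : a * ((n : ℤ) + 1) = 0 :=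
      Int.eq_zero_of_abs_lt_dvd (dvd_mul_left _ _) (abs_lt.mpr ⟨by omega, by omega⟩)
    omega

theorem exists_zpow_meshFEquiv_apply_mem_meshFundDomain (p : Mesh n) (hl1 : 1 ≤ p.1.2)
    (hl2 : p.1.2 ≤ (n : ℤ)) : ∃ m : ℤ, (meshFEquiv n ^ m) p ∈ meshFundDomain n := by
  obtain ⟨d, r, hr0, hrn, hk⟩ :
      ∃ d r : ℤ, 0 ≤ r ∧ r ≤ n ∧ p.1.1 + d * ((n : ℤ) + 1) = r :=
    ⟨-(p.1.1 / ((n : ℤ) + 1)), p.1.1 % ((n : ℤ) + 1), Int.emod_nonneg _ (by omega),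
      by have := Int.emod_lt_of_pos p.1.1 (by omega : 0 < (n : ℤ) + 1); omega,
      by linear_combination -Int.mul_ediv_add_emod p.1.1 ((n : ℤ) + 1)⟩
  by_cases hr : r ≤ n - p.1.2
  · refine ⟨2 * d, ?_⟩
    simp only [meshFundDomain, Set.mem_ofPred_eq, meshFEquiv_zpow_two_mul_apply_val]
    omega
  · refine ⟨2 * (d - 1) + 1, ?_⟩
    simp only [meshFundDomain, Set.mem_ofPred_eq, meshFEquiv_zpow_two_mul_add_one_apply_val]
    have : (d - 1) * ((n : ℤ) + 1) = d * ((n : ℤ) + 1) - (n + 1) := by ring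
    omega

theorem existsUnique_mem_meshFundDomain_zpow_apply_eq (p : Mesh n) (hl1 : 1 ≤ p.1.2)
    (hl2 : p.1.2 ≤ (n : ℤ)) :
    ∃! q : Mesh n, q ∈ meshFundDomain n ∧ ∃ m : ℤ, (meshFEquiv n ^ m) p = q := by
  obtain ⟨m, hm⟩ := exists_zpow_meshFEquiv_apply_mem_meshFundDomain p hl1 hl2
  refine ⟨_, ⟨hm, m, rfl⟩, ?_⟩
  rintro _ ⟨hq, m', rfl⟩
  refine eq_of_mem_meshFundDomain_of_zpow_apply_eq hq hm (m := m - m') ?_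
  rw [← Equiv.Perm.mul_apply, ← zpow_add, sub_add_cancel]

def meshFundDomainPoint (x : {x : Fin n × Fin n // x.1 ≤ x.2}) : Mesh n :=
  ⟨((x.1.1 : ℤ), n - x.1.2), by have := x.1.2.isLt; omega⟩

theorem meshFundDomainPoint_mem (x : {x : Fin n × Fin n // x.1 ≤ x.2}) :
    meshFundDomainPoint x ∈ meshFundDomain n := by
  have := x.1.2.isLt
  have : (x.1.1 : ℕ) ≤ x.1.2 := x.2
  refine ⟨?_, ?_, ?_, ?_⟩ <;> dsimp only [meshFundDomainPoint] <;> omega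

theorem meshFundDomainPoint_injective : Function.Injective (meshFundDomainPoint (n := n)) := by
  intro x y hxy
  obtain ⟨hk, hl⟩ := Prod.ext_iff.mp (congrArg Subtype.val hxy)
  simp only [meshFundDomainPoint] at hk hl
  exact Subtype.ext (Prod.ext (Fin.ext (by omega)) (Fin.ext (by omega)))

theorem exists_meshFundDomainPoint_eq {q : Mesh n} (hq : q ∈ meshFundDomain n) :
    ∃ x, meshFundDomainPoint x = q := by
  obtain ⟨hl1, hl2, hk1, hk2⟩ := hq
  refine ⟨⟨(⟨q.1.1.toNat, by omega⟩, ⟨(n - q.1.2).toNat, by omega⟩), ?_⟩, ?_⟩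
  · show q.1.1.toNat ≤ (n - q.1.2).toNat
    omega
  · exact Subtype.ext (Prod.ext (Int.toNat_of_nonneg hk1)
      (by simp only [meshFundDomainPoint, Int.ofNat_toNat]; omega))

theorem card_quotient_meshOrbitSetoid :
    Nat.card (Quotient (meshOrbitSetoid n)) = n * (n + 1) / 2 := by
  let φ (x : {x : Fin n × Fin n // x.1 ≤ x.2}) : Quotient (meshOrbitSetoid n) :=
    Quotient.mk _ ⟨meshFundDomainPoint x, (meshFundDomainPoint_mem x).1,
      (meshFundDomainPoint_mem x).2.1⟩
  have hφ : Function.Bijective φ := by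
    refine ⟨fun x y hxy => ?_, Quotient.ind fun p => ?_⟩
    · obtain ⟨m, hm⟩ := Quotient.exact hxy
      exact meshFundDomainPoint_injective <| eq_of_mem_meshFundDomain_of_zpow_apply_eq
        (meshFundDomainPoint_mem x) (meshFundDomainPoint_mem y) hm
    · obtain ⟨m, hm⟩ := exists_zpow_meshFEquiv_apply_mem_meshFundDomain p.1 p.2.1 p.2.2
      obtain ⟨x, hx⟩ := exists_meshFundDomainPoint_eq hm
      exact ⟨x, Quotient.sound ((meshOrbitSetoid n).symm ⟨m, hx.symm⟩)⟩
  rw [← Nat.card_congr (Equiv.ofBijective φ hφ), Nat.card_congr Sym2.sortEquiv.symm,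
    Nat.card_eq_fintype_card, Sym2.card, Fintype.card_fin, Nat.choose_two_right,
    Nat.add_sub_cancel, Nat.mul_comm]

end MeshOrbits

theorem mesh_f_orbits_general (n : ℕ) :
    (∀ p : Mesh n, 1 ≤ p.1.2 → p.1.2 ≤ (n : ℤ) →
      ∃! q : Mesh n,
        (1 ≤ q.1.2 ∧ q.1.2 ≤ (n : ℤ) ∧ 0 ≤ q.1.1 ∧ q.1.1 ≤ (n : ℤ) - q.1.2) ∧
        ∃ m : ℤ, (meshFEquiv n ^ m) p = q) ∧
    Nat.card (Quotient (meshOrbitSetoid n)) = n * (n + 1) / 2 :=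
  ⟨existsUnique_mem_meshFundDomain_zpow_apply_eq, card_quotient_meshOrbitSetoid⟩

/-- every `⟨f⟩`-orbit on the interior `I_n` contains exactly one element of
the fundamental domain `T_n = {(k,l) : 1 ≤ l ≤ n, 0 ≤ k ≤ n - l}`; consequently `f` has
exactly `n(n+1)/2` orbits on `I_n`. -/
theorem mesh_f_orbits (n : ℕ) (hn : 1 ≤ n) :
    (∀ p : Mesh n, 1 ≤ p.1.2 → p.1.2 ≤ (n : ℤ) →
      ∃! q : Mesh n,
        (1 ≤ q.1.2 ∧ q.1.2 ≤ (n : ℤ) ∧ 0 ≤ q.1.1 ∧ q.1.1 ≤ (n : ℤ) - q.1.2) ∧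
        ∃ m : ℤ, (meshFEquiv n ^ m) p = q) ∧
    Nat.card (Quotient (meshOrbitSetoid n)) = n * (n + 1) / 2 :=
  mesh_f_orbits_general n
end

section
/- The map v : {1,…,n} × {1,…,n}ᵒᵖ × {1,…,n} → M_n defined by v(k,l,m) = (0,m) if k ≤ l, v(k,l,m) = (m,0) if l < k and m < k, and v(k,l,m) = (k−1, m+1−k) if l < k and k ≤ m, is monotone, where the outer factors {1,…,n} carry the usual linear order, the middle factor carries the opposite order, and the domain the product order. Moreover v(k,1,n) = (k−1, n+1−k) for every k ∈ {1,…,n}. -/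
/-- The linearly ordered set `{1, …, n}` (as a subtype of `ℤ`). -/
abbrev Ln (n : ℕ) : Type := {l : ℤ // 1 ≤ l ∧ l ≤ (n : ℤ)}

/-- The map `v : {1,…,n} × {1,…,n}ᵒᵖ × {1,…,n} → M_n` with `v(k,l,m) = (0,m)` if `k ≤ l`,
`v(k,l,m) = (m,0)` if `l < k` and `m < k`, and `v(k,l,m) = (k-1, m+1-k)` otherwise. -/
def vMap (n : ℕ) (x : Ln n × (Ln n)ᵒᵈ × Ln n) : Mesh n :=
  if x.1.1 ≤ (OrderDual.ofDual x.2.1).1 then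
    ⟨(0, x.2.2.1), by obtain ⟨h1, h2⟩ := x.2.2.2; constructor <;> omega⟩
  else if h : x.2.2.1 < x.1.1 then
    ⟨(x.2.2.1, 0), by constructor <;> omega⟩
  else
    ⟨(x.1.1 - 1, x.2.2.1 + 1 - x.1.1), by
      obtain ⟨h1, h2⟩ := x.1.2
      obtain ⟨h3, h4⟩ := x.2.2.2
      constructor <;> omega⟩

/-
In all three cases the coordinates of `v(k,l,m)` add up to `m`, so by the definition of the
order on `M_n` only the first coordinates need to be compared. The first coordinate is `0` if
`k ≤ l` and `min m (k - 1)` otherwise: monotone in `k` and `m`, antitone in `l`.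
-/

theorem Mesh.le_iff {n : ℕ} {p q : Mesh n} :
    p ≤ q ↔ p.1.1 ≤ q.1.1 ∧ p.1.1 + p.1.2 ≤ q.1.1 + q.1.2 :=
  Iff.rfl

theorem Mesh.ext_iff {n : ℕ} {p q : Mesh n} :
    p = q ↔ p.1.1 = q.1.1 ∧ p.1.1 + p.1.2 = q.1.1 + q.1.2 := by
  refine ⟨by rintro rfl; exact ⟨rfl, rfl⟩, fun ⟨h₁, h₂⟩ => Subtype.ext (Prod.ext h₁ ?_)⟩
  omega

section vMap

variable {n : ℕ}

theorem vMap_fst_add_snd (k : Ln n) (l : (Ln n)ᵒᵈ) (m : Ln n) :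
    (vMap n (k, l, m)).1.1 + (vMap n (k, l, m)).1.2 = m.1 := by
  by_cases h₁ : k.1 ≤ (OrderDual.ofDual l).1
  · simp [vMap, h₁]
  by_cases h₂ : m.1 < k.1 <;> simp [vMap, h₁, h₂]

theorem vMap_fst (k : Ln n) (l : (Ln n)ᵒᵈ) (m : Ln n) :
    (vMap n (k, l, m)).1.1 = if k.1 ≤ (OrderDual.ofDual l).1 then 0 else min m.1 (k.1 - 1) := by
  by_cases h₁ : k.1 ≤ (OrderDual.ofDual l).1
  · simp [vMap, h₁]
  by_cases h₂ : m.1 < k.1 <;> simp [vMap, h₁, h₂]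
  omega

theorem monotone_vMap_fst : Monotone fun x : Ln n × (Ln n)ᵒᵈ × Ln n => (vMap n x).1.1 := by
  rintro ⟨k, l, m⟩ ⟨k', l', m'⟩ ⟨hk, hl, hm⟩
  have hk' : k.1 ≤ k'.1 := hk
  have hl' : (OrderDual.ofDual l').1 ≤ (OrderDual.ofDual l).1 := hl
  have hm' : m.1 ≤ m'.1 := hm
  simp only [vMap_fst]
  split_ifs <;> omega

theorem monotone_vMap : Monotone (vMap n) := by
  rintro ⟨k, l, m⟩ ⟨k', l', m'⟩ h
  refine Mesh.le_iff.2 ⟨monotone_vMap_fst h, ?_⟩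
  rw [vMap_fst_add_snd, vMap_fst_add_snd]
  exact h.2.2

end vMap

/-- the map `v` is monotone (the middle factor carrying the opposite
order), and `v(k, 1, n) = (k-1, n+1-k)` for every `k ∈ {1,…,n}`. -/
theorem vMap_monotone (n : ℕ) (hn : 1 ≤ n) :
    Monotone (vMap n) ∧
    ∀ k : Ln n,
      vMap n (k, OrderDual.toDual ⟨1, le_refl 1, by exact_mod_cast hn⟩,
          ⟨(n : ℤ), by exact_mod_cast hn, le_refl _⟩) =
        ⟨(k.1 - 1, (n : ℤ) + 1 - k.1), by obtain ⟨h1, h2⟩ := k.2; constructor <;> omega⟩ := by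
  refine ⟨monotone_vMap, fun k => Mesh.ext_iff.2 ⟨?_, ?_⟩⟩
  · simp only [vMap_fst, OrderDual.ofDual_toDual]
    split_ifs <;> omega
  · simp only [vMap_fst_add_snd]
    omega
end

section
/- Let Q be a loopless quiver (s(e) ≠ t(e) for every edge e) with exactly n vertices, and let (a₁,…,a_n) be an admissible sequence of sinks, i.e., an enumeration without repetition of all vertices such that a₁ is a sink of Q and, for each 2 ≤ i ≤ n, the vertex a_i is a sink of σ_{a_{i−1}}⋯σ_{a₁}Q. Then the full composite of reflections returns the original quiver: σ_{a_n}σ_{a_{n−1}}⋯σ_{a₁}Q = Q, i.e., the resulting source and target maps coincide with those of Q. -/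
/-- Reflecting a quiver, given by a pair `(source map, target map)`, at a vertex `a`:
every edge with target `a` gets its source and target interchanged. -/
def reflPair {V E : Type*} [DecidableEq V] (p : (E → V) × (E → V)) (a : V) :
    (E → V) × (E → V) :=
  (fun e => if p.2 e = a then p.2 e else p.1 e,
   fun e => if p.2 e = a then p.1 e else p.2 e)

/-- Iterated reflection `σ_{a_m} ⋯ σ_{a_1} Q` along a list `[a_1, …, a_m]` of vertices. -/
def reflectList {V E : Type*} [DecidableEq V] (s t : E → V) (l : List V) :
    (E → V) × (E → V) :=
  l.foldl reflPair (s, t)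

/-!
Reflections act on each edge separately, through its pair `(source, target)`. Take an edge
`x → y` with `x ≠ y`. Until `y` is reflected the edge does not move, so admissibility forces `y`
to come before `x`; reflecting at `y` turns the edge into `y → x`, which stays put until `x` is
reflected and turns it back into `x → y`. Since every vertex is reflected exactly once, nothing
moves the edge afterwards.
-/

lemma List.forall_append_cons_of_forall_getElem {α : Type*} {P : List α → α → Prop}
    {l : List α} (h : ∀ i (hi : i < l.length), P (l.take i) l[i]) :
    ∀ l₁ v l₂, l = l₁ ++ v :: l₂ → P l₁ v := by
  rintro l₁ v l₂ rfl
  simpa using h l₁.length (by simp)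

section ReflectEdge

variable {V : Type*} [DecidableEq V]

def reflectEdge (p : V × V) (v : V) : V × V :=
  if p.2 = v then p.swap else p

lemma foldl_reflectEdge_eq_reflectList {E : Type*} (s t : E → V) (l : List V) (e : E) :
    l.foldl reflectEdge (s e, t e) = ((reflectList s t l).1 e, (reflectList s t l).2 e) :=
  List.foldl_hom (fun p : (E → V) × (E → V) => (p.1 e, p.2 e)) (init := (s, t)) fun p v => by
    by_cases h : p.2 e = v <;> simp [reflPair, reflectEdge, h]

lemma foldl_reflectEdge_of_not_mem {x y : V} {l : List V} (hy : y ∉ l) :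
    l.foldl reflectEdge (x, y) = (x, y) := by
  induction l with
  | nil => rfl
  | cons v l ih =>
    rw [List.mem_cons, not_or] at hy
    simp [reflectEdge, hy.1, ih hy.2]

lemma foldl_reflectEdge_append_cons_append_cons {x y : V} {l₁ l₂ l₃ : List V}
    (hy₁ : y ∉ l₁) (hx₂ : x ∉ l₂) (hy₃ : y ∉ l₃) :
    (l₁ ++ y :: (l₂ ++ x :: l₃)).foldl reflectEdge (x, y) = (x, y) := by
  simp [foldl_reflectEdge_of_not_mem, reflectEdge, hy₁, hx₂, hy₃]

lemma foldl_reflectEdge_eq_self {x y : V} (hxy : x ≠ y) {l : List V} (hl : l.Nodup)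
    (hx : x ∈ l) (hy : y ∈ l)
    (hsink : ∀ l₁ v l₂, l = l₁ ++ v :: l₂ → (l₁.foldl reflectEdge (x, y)).1 ≠ v) :
    l.foldl reflectEdge (x, y) = (x, y) := by
  obtain ⟨l₁, l₂, rfl⟩ := List.append_of_mem hy
  have hy₁ : y ∉ l₁ := fun h => (List.nodup_append.mp hl).2.2 y h y List.mem_cons_self rfl
  have hy₂ : y ∉ l₂ := (List.nodup_cons.mp (List.nodup_append.mp hl).2.1).1
  have hx₁ : x ∉ l₁ := by
    intro hx₁
    obtain ⟨p, q, rfl⟩ := List.append_of_mem hx₁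
    refine hsink p x (q ++ y :: l₂) (by simp) ?_
    rw [foldl_reflectEdge_of_not_mem fun h => hy₁ (List.mem_append_left _ h)]
  have hx₂ : x ∈ l₂ := by simpa [hx₁, hxy] using hx
  obtain ⟨l₃, l₄, rfl⟩ := List.append_of_mem hx₂
  have hl₂ : (l₃ ++ x :: l₄).Nodup := (List.nodup_cons.mp (List.nodup_append.mp hl).2.1).2
  refine foldl_reflectEdge_append_cons_append_cons hy₁ ?_ ?_
  · exact fun h => (List.nodup_append.mp hl₂).2.2 x h x List.mem_cons_self rfl
  · exact fun h => hy₂ (List.mem_append_right _ (List.mem_cons_of_mem _ h))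

end ReflectEdge

theorem admissible_sequence_reflections_identity_general
    (V E : Type*) [DecidableEq V] (s t : E → V)
    (hloopless : ∀ e, s e ≠ t e)
    (n : ℕ) (a : Fin n → V) (ha : Function.Bijective a)
    (hadm : ∀ i : Fin n, ∀ e, (reflectList s t ((List.ofFn a).take i)).1 e ≠ a i) :
    reflectList s t (List.ofFn a) = (s, t) := by
  have hnd : (List.ofFn a).Nodup := List.nodup_ofFn.mpr ha.injective
  have hmem (v : V) : v ∈ List.ofFn a := List.mem_ofFn.mpr (ha.surjective v)
  have hedge (e : E) :
      ((reflectList s t (List.ofFn a)).1 e, (reflectList s t (List.ofFn a)).2 e) = (s e, t e) := by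
    rw [← foldl_reflectEdge_eq_reflectList]
    refine foldl_reflectEdge_eq_self (hloopless e) hnd (hmem _) (hmem _) ?_
    refine List.forall_append_cons_of_forall_getElem fun i hi => ?_
    rw [foldl_reflectEdge_eq_reflectList, List.getElem_ofFn hi]
    exact hadm ⟨i, by simpa using hi⟩ e
  exact Prod.ext (funext fun e => congrArg Prod.fst (hedge e))
    (funext fun e => congrArg Prod.snd (hedge e))

/-- for a loopless quiver with exactly `n` vertices and an admissible
sequence of sinks `(a₁, …, a_n)` (an enumeration without repetition of all vertices such
that each `a_i` is a sink of `σ_{a_{i-1}} ⋯ σ_{a_1} Q`), the full composite of reflections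
returns the original quiver: `σ_{a_n} ⋯ σ_{a_1} Q = Q`. -/
theorem admissible_sequence_reflections_identity
    (V E : Type*) [Fintype V] [DecidableEq V] (s t : E → V)
    (hloopless : ∀ e, s e ≠ t e)
    (n : ℕ) (a : Fin n → V) (ha : Function.Bijective a)
    (hadm : ∀ i : Fin n, ∀ e, (reflectList s t ((List.ofFn a).take i)).1 e ≠ a i) :
    reflectList s t (List.ofFn a) = (s, t) :=
  admissible_sequence_reflections_identity_general V E s t hloopless n a ha hadm
end
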